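/- Let H be a Hopf algebra with bijective antipode S and P a right H-comodule algebra. The assignment g_l ↦ g_r := g_l ∘ S⁻¹ defines a bijection between the set of convolution invertible linear maps g_l : H → P with g_l(1)=1 and Δ_P(g_l(h)) = Σ g_l(h₂) ⊗ S(h₁)h₃ (data of left gauge transformations) and the set of twisted convolution invertible linear maps g_r : H → P with g_r(1)=1 and Δ_P(g_r(h)) = Σ g_r(h₂) ⊗ h₃ S⁻¹(h₁) (data of right gauge transformations). -/

import Mathlib

open TensorProduct

variable {k : Type*} [Field k]
variable {H : Type*} [Ring H] [HopfAlgebra k H]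
variable {P : Type*} [Ring P] [Algebra k P]

noncomputable def conv (f g : H →ₗ[k] P) : H →ₗ[k] P :=
  LinearMap.mul' k P ∘ₗ TensorProduct.map f g ∘ₗ Coalgebra.comul

/-- Twisted convolution: `(f ⋆' g)(h) = Σ f(h₂) g(h₁)`. -/
noncomputable def twistedConv (f g : H →ₗ[k] P) : H →ₗ[k] P :=
  LinearMap.mul' k P ∘ₗ TensorProduct.map f g ∘ₗ
    (TensorProduct.comm k H H).toLinearMap ∘ₗ Coalgebra.comul

noncomputable def convUnit : H →ₗ[k] P :=
  Algebra.linearMap k P ∘ₗ Coalgebra.counit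

/-- `h ↦ Σ g(h₂) ⊗ S(h₁)h₃`. -/
noncomputable def adCoactL (g : H →ₗ[k] P) : H →ₗ[k] P ⊗[k] H :=
  (TensorProduct.map g
      (LinearMap.mul' k H ∘ₗ
        TensorProduct.map (HopfAlgebra.antipode (R := k)) LinearMap.id)) ∘ₗ
    (TensorProduct.assoc k H H H).toLinearMap ∘ₗ
    (TensorProduct.map (TensorProduct.comm k H H).toLinearMap LinearMap.id) ∘ₗ
    (TensorProduct.map (Coalgebra.comul : H →ₗ[k] H ⊗[k] H) LinearMap.id) ∘ₗ
    (Coalgebra.comul : H →ₗ[k] H ⊗[k] H)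

/-- `h ↦ Σ g(h₂) ⊗ h₃ S⁻¹(h₁)`. -/
noncomputable def adCoactR (Sinv : H →ₗ[k] H) (g : H →ₗ[k] P) : H →ₗ[k] P ⊗[k] H :=
  (TensorProduct.map g
      (LinearMap.mul' k H ∘ₗ (TensorProduct.comm k H H).toLinearMap ∘ₗ
        TensorProduct.map Sinv LinearMap.id)) ∘ₗ
    (TensorProduct.assoc k H H H).toLinearMap ∘ₗ
    (TensorProduct.map (TensorProduct.comm k H H).toLinearMap LinearMap.id) ∘ₗ
    (TensorProduct.map (Coalgebra.comul : H →ₗ[k] H ⊗[k] H) LinearMap.id) ∘ₗ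
    (Coalgebra.comul : H →ₗ[k] H ⊗[k] H)

/-- Data of a left gauge transformation. -/
def LeftData (ΔP : P →ₗ[k] P ⊗[k] H) (g : H →ₗ[k] P) : Prop :=
  g 1 = 1 ∧ ΔP ∘ₗ g = adCoactL g ∧
  ∃ g' : H →ₗ[k] P, conv g g' = (convUnit : H →ₗ[k] P) ∧
    conv g' g = (convUnit : H →ₗ[k] P)

/-- Data of a right gauge transformation. -/
def RightData (ΔP : P →ₗ[k] P ⊗[k] H) (Sinv : H →ₗ[k] H) (g : H →ₗ[k] P) : Prop :=
  g 1 = 1 ∧ ΔP ∘ₗ g = adCoactR Sinv g ∧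
  ∃ g' : H →ₗ[k] P, twistedConv g g' = (convUnit : H →ₗ[k] P) ∧
    twistedConv g' g = (convUnit : H →ₗ[k] P)

/-!
The antipode is an anti-coalgebra map, `Δ (S h) = S h₂ ⊗ S h₁`: both sides are convolution
inverses of `Δ`. Precomposing with `S` therefore turns twisted convolution into convolution and
fixes the convolution unit, and, by coassociativity, it turns `h ↦ g(h₂) ⊗ h₃ S⁻¹(h₁)` into
`h ↦ g(S h₂) ⊗ S(h₁) h₃`. Hence `g` is right gauge data exactly when `g ∘ S` is left gauge data,
and `g ↦ g ∘ S⁻¹`, `g ↦ g ∘ S` are mutually inverse between the two sets.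
-/

open Coalgebra WithConv

namespace HopfAlgebra

variable {R A B : Type*} [CommSemiring R] [Semiring A] [HopfAlgebra R A] [Semiring B]
  [Algebra R B]

theorem algHom_comp_antipode_mul_self (φ : A →ₐ[R] B) :
    toConv (φ.toLinearMap ∘ₗ antipode R) * toConv φ.toLinearMap = 1 := by
  ext a
  simp [(ℛ R a).convMul_apply, ← map_mul, ← map_sum, sum_antipode_mul_eq_algebraMap_counit]

theorem comul_comp_antipode :
    comul ∘ₗ antipode R (A := A) =
      map (antipode R) (antipode R) ∘ₗ (TensorProduct.comm R A A).toLinearMap ∘ₗ comul := by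
  set inl : A →ₐ[R] A ⊗[R] A := Algebra.TensorProduct.includeLeft
  set inr : A →ₐ[R] A ⊗[R] A := Algebra.TensorProduct.includeRight
  have comul_eq : toConv (comul : A →ₗ[R] A ⊗[R] A) =
      toConv inl.toLinearMap * toConv inr.toLinearMap := by
    ext a
    simp [inl, inr, (ℛ R a).convMul_apply, ← (ℛ R a).eq]
  have flip_eq :
      toConv (map (antipode R) (antipode R) ∘ₗ (TensorProduct.comm R A A).toLinearMap ∘ₗ comul) =
        toConv (inr.toLinearMap ∘ₗ antipode R) * toConv (inl.toLinearMap ∘ₗ antipode R) := by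
    ext a
    simp [inl, inr, (ℛ R a).convMul_apply, ← (ℛ R a).eq]
  have left_inv :
      toConv (map (antipode R) (antipode R) ∘ₗ (TensorProduct.comm R A A).toLinearMap ∘ₗ comul) *
        toConv comul = 1 := by
    rw [flip_eq, comul_eq, mul_assoc, ← mul_assoc (toConv (inl.toLinearMap ∘ₗ antipode R)),
      algHom_comp_antipode_mul_self, one_mul, algHom_comp_antipode_mul_self]
  exact congrArg ofConv (left_inv_eq_right_inv left_inv LinearMap.comul_right_inv).symm

end HopfAlgebra

@[simps]
noncomputable def Coalgebra.Repr.antipode {R A ι : Type*} [CommSemiring R] [Semiring A]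
    [HopfAlgebra R A] {a : A} (r : Repr R a ι) : Repr R (HopfAlgebra.antipode R a) ι where
  index := r.index
  left := HopfAlgebra.antipode R ∘ r.right
  right := HopfAlgebra.antipode R ∘ r.left
  eq := by
    rw [← LinearMap.comp_apply (f := comul), HopfAlgebra.comul_comp_antipode,
      LinearMap.comp_apply, LinearMap.comp_apply, ← r.eq]
    simp

local notation "S" => HopfAlgebra.antipode k (A := H)

section Sweedler

variable {ι : Type*} {κ : ι → Type*} {h : H}

lemma adCoactL_eq_sum (g : H →ₗ[k] P) (r : Repr k h ι) (a : ∀ i, Repr k (r.left i) (κ i)) :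
    adCoactL g h = ∑ i ∈ r.index, ∑ j ∈ (a i).index,
      g ((a i).right j) ⊗ₜ (S ((a i).left j) * r.right i) := by
  simp [adCoactL, ← r.eq, ← (a _).eq, sum_tmul]

lemma adCoactR_eq_sum (Sinv : H →ₗ[k] H) (g : H →ₗ[k] P) (r : Repr k h ι)
    (a : ∀ i, Repr k (r.left i) (κ i)) :
    adCoactR Sinv g h = ∑ i ∈ r.index, ∑ j ∈ (a i).index,
      g ((a i).right j) ⊗ₜ (r.right i * Sinv ((a i).left j)) := by
  simp [adCoactR, ← r.eq, ← (a _).eq, sum_tmul]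

end Sweedler

lemma adCoactR_comp_antipode {Sinv : H →ₗ[k] H} (hS : Sinv ∘ₗ S = LinearMap.id)
    (g : H →ₗ[k] P) : adCoactR Sinv g ∘ₗ S = adCoactL (g ∘ₗ S) := by
  have hSinv (x : H) : Sinv (S x) = x := LinearMap.congr_fun hS x
  ext h
  let r := ℛ k h
  let a := fun i : H × H => ℛ k (r.left i)
  let p := fun i : H × H => ℛ k (r.right i)
  have coassoc := congrArg
    (map (g ∘ₗ S) (LinearMap.mul' k H ∘ₗ map S LinearMap.id) ∘ₗ
      (TensorProduct.leftComm k H H H).toLinearMap)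
    (sum_tmul_tmul_eq r a p)
  simp only [map_sum, LinearMap.comp_apply, LinearEquiv.coe_coe, leftComm_tmul, map_tmul,
    LinearMap.mul'_apply, LinearMap.id_apply] at coassoc
  rw [LinearMap.comp_apply, adCoactR_eq_sum Sinv g r.antipode fun i => (p i).antipode,
    adCoactL_eq_sum _ r a]
  simp only [LinearMap.comp_apply]
  rw [coassoc]
  simp [hSinv]

lemma twistedConv_comp_antipode (f f' : H →ₗ[k] P) :
    twistedConv f f' ∘ₗ S = conv (f ∘ₗ S) (f' ∘ₗ S) := by
  ext h
  simp [twistedConv, conv, ← LinearMap.comp_apply (f := comul), HopfAlgebra.comul_comp_antipode,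
    ← (ℛ k h).eq]

lemma convUnit_comp_antipode : (convUnit : H →ₗ[k] P) ∘ₗ S = convUnit := by
  ext h
  simp [convUnit]

lemma twistedConv_eq_convUnit_iff (hS : Function.Surjective S) (f f' : H →ₗ[k] P) :
    twistedConv f f' = convUnit ↔ conv (f ∘ₗ S) (f' ∘ₗ S) = convUnit := by
  rw [← LinearMap.cancel_right hS, twistedConv_comp_antipode, convUnit_comp_antipode]

lemma rightData_iff_leftData_comp_antipode (ΔP : P →ₗ[k] P ⊗[k] H) {Sinv : H →ₗ[k] H}
    (hS1 : S ∘ₗ Sinv = LinearMap.id) (hS2 : Sinv ∘ₗ S = LinearMap.id) (g : H →ₗ[k] P) :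
    RightData ΔP Sinv g ↔ LeftData ΔP (g ∘ₗ S) := by
  have hS : Function.Surjective S := fun x => ⟨Sinv x, LinearMap.congr_fun hS1 x⟩
  have inv_iff :
      (∃ g' : H →ₗ[k] P, twistedConv g g' = convUnit ∧ twistedConv g' g = convUnit) ↔
        ∃ g' : H →ₗ[k] P, conv (g ∘ₗ S) g' = convUnit ∧ conv g' (g ∘ₗ S) = convUnit := by
    simp only [twistedConv_eq_convUnit_iff hS]
    constructor
    · rintro ⟨g', hgg', hg'g⟩
      exact ⟨g' ∘ₗ S, hgg', hg'g⟩
    · rintro ⟨g', hgg', hg'g⟩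
      refine ⟨g' ∘ₗ Sinv, ?_, ?_⟩ <;> rwa [LinearMap.comp_assoc, hS2, LinearMap.comp_id]
  rw [RightData, LeftData, LinearMap.comp_apply, HopfAlgebra.antipode_one, inv_iff,
    ← adCoactR_comp_antipode hS2, ← LinearMap.comp_assoc, LinearMap.cancel_right hS]

theorem statement_8_general (ΔP : P →ₗ[k] P ⊗[k] H)
    (Sinv : H →ₗ[k] H)
    (hS1 : (HopfAlgebra.antipode (R := k) (A := H)) ∘ₗ Sinv = LinearMap.id)
    (hS2 : Sinv ∘ₗ (HopfAlgebra.antipode (R := k) (A := H)) = LinearMap.id) :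
    Set.BijOn (fun g : H →ₗ[k] P => g ∘ₗ Sinv)
      {g | LeftData ΔP g} {g | RightData ΔP Sinv g} := by
  have key := rightData_iff_leftData_comp_antipode ΔP hS1 hS2
  refine Set.InvOn.bijOn (f' := fun g => g ∘ₗ S) ⟨?_, ?_⟩ ?_ ?_
  · intro g _
    simp only [LinearMap.comp_assoc, hS2, LinearMap.comp_id]
  · intro g _
    simp only [LinearMap.comp_assoc, hS1, LinearMap.comp_id]
  · intro g (hg : LeftData ΔP g)
    exact (key _).2 (by rwa [LinearMap.comp_assoc, hS2, LinearMap.comp_id])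
  · exact fun g hg => (key g).1 hg

theorem statement_8 (ΔP : P →ₗ[k] P ⊗[k] H)
    (hP1 : ΔP 1 = 1)
    (hcoassoc : (TensorProduct.assoc k P H H).toLinearMap ∘ₗ
        (TensorProduct.map ΔP LinearMap.id) ∘ₗ ΔP
      = (TensorProduct.map LinearMap.id (Coalgebra.comul : H →ₗ[k] H ⊗[k] H)) ∘ₗ ΔP)
    (hcounit : (TensorProduct.rid k P).toLinearMap ∘ₗ
        (TensorProduct.map LinearMap.id (Coalgebra.counit : H →ₗ[k] k)) ∘ₗ ΔP
      = LinearMap.id)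
    (hmul : ∀ f g : P, ΔP (f * g) = ΔP f * ΔP g)
    (Sinv : H →ₗ[k] H)
    (hS1 : (HopfAlgebra.antipode (R := k) (A := H)) ∘ₗ Sinv = LinearMap.id)
    (hS2 : Sinv ∘ₗ (HopfAlgebra.antipode (R := k) (A := H)) = LinearMap.id) :
    Set.BijOn (fun g : H →ₗ[k] P => g ∘ₗ Sinv)
      {g | LeftData ΔP g} {g | RightData ΔP Sinv g} :=
  statement_8_general ΔP Sinv hS1 hS2
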